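/- Let L be a Leibniz algebra over a field 𝕜 with left center Z, and let ω ∈ C̃^n(L), η ∈ C̃^m(L) be representable cochains. Then the bracket is graded antisymmetric: {ω,η} = −(−1)^{nm} {η,ω}; equivalently, ω•η = −(−1)^{nm} η•ω. -/
import Mathlib


open scoped TensorProduct

universe u v w

/-- A (left) Leibniz algebra over a field `𝕜`. -/
structure LeibnizAlg (𝕜 : Type u) [Field 𝕜] (L : Type v) [AddCommGroup L] [Module 𝕜 L] where
  br : L →ₗ[𝕜] L →ₗ[𝕜] L
  leibniz : ∀ a b c : L, br a (br b c) = br (br a b) c + br b (br a c)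

namespace LeibnizAlg

variable {𝕜 : Type u} [Field 𝕜] {L : Type v} [AddCommGroup L] [Module 𝕜 L]
variable (A : LeibnizAlg 𝕜 L)

/-- The left center `Z = {z | z ∘ e = 0 for all e}`. -/
def leftCenter : Submodule 𝕜 L where
  carrier := {z | ∀ e : L, A.br z e = 0}
  add_mem' := by
    intro a b ha hb
    simp only [Set.mem_setOf_eq] at *
    intro e
    rw [map_add, LinearMap.add_apply, ha e, hb e, add_zero]
  zero_mem' := by
    simp only [Set.mem_setOf_eq]
    intro e
    rw [map_zero, LinearMap.zero_apply]
  smul_mem' := by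
    intro c x hx
    simp only [Set.mem_setOf_eq] at *
    intro e
    rw [map_smul, LinearMap.smul_apply, hx e, smul_zero]

lemma mem_leftCenter_iff {z : L} : z ∈ A.leftCenter ↔ ∀ e : L, A.br z e = 0 := Iff.rfl

/-- The symmetric product `(a,b) = a∘b + b∘a`. -/
def sp (a b : L) : L := A.br a b + A.br b a

lemma sp_mem (a b : L) : A.sp a b ∈ A.leftCenter := by
  rw [mem_leftCenter_iff]
  intro e
  have h1 := A.leibniz a b e
  have h2 := A.leibniz b a e
  have hx : A.br (A.br a b) e = A.br a (A.br b e) - A.br b (A.br a e) :=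
    eq_sub_iff_add_eq.mpr h1.symm
  have hy : A.br (A.br b a) e = A.br b (A.br a e) - A.br a (A.br b e) :=
    eq_sub_iff_add_eq.mpr h2.symm
  rw [sp, map_add, LinearMap.add_apply, hx, hy]
  abel

/-- The symmetric product, seen as valued in the left center. -/
def spZ (a b : L) : A.leftCenter := ⟨A.sp a b, A.sp_mem a b⟩

lemma br_mem (e : L) (f : A.leftCenter) : A.br e (f : L) ∈ A.leftCenter := by
  rw [mem_leftCenter_iff]
  intro e'
  have h := A.leibniz e (f : L) e'
  have hf : A.br (f : L) e' = 0 := (A.mem_leftCenter_iff.mp f.2) e'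
  have hf2 : A.br (f : L) (A.br e e') = 0 := (A.mem_leftCenter_iff.mp f.2) _
  rw [hf] at h
  rw [map_zero] at h
  rw [hf2, add_zero] at h
  exact h.symm

/-- The bracket of `L` on its left center. -/
def brZ (e : L) (f : A.leftCenter) : A.leftCenter := ⟨A.br e (f : L), A.br_mem e f⟩

/-- The symmetric product as a bilinear map into the left center. -/
noncomputable def spL : L →ₗ[𝕜] L →ₗ[𝕜] A.leftCenter :=
  LinearMap.mk₂ 𝕜 A.spZ
    (fun a a' b => Subtype.ext (by
      simp only [spZ, sp, map_add, LinearMap.add_apply, Submodule.coe_add]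
      abel))
    (fun c a b => Subtype.ext (by
      simp only [spZ, sp, map_smul, LinearMap.smul_apply, SetLike.val_smul, smul_add]))
    (fun a b b' => Subtype.ext (by
      simp only [spZ, sp, map_add, LinearMap.add_apply, Submodule.coe_add]
      abel))
    (fun c a b => Subtype.ext (by
      simp only [spZ, sp, map_smul, LinearMap.smul_apply, SetLike.val_smul, smul_add]))

end LeibnizAlg

/-- `(S, ι)` is (a model of) the symmetric algebra of the module `Z`:
it satisfies the universal property. -/
def IsSymAlg {𝕜 : Type u} [Field 𝕜] {Z : Type v} [AddCommGroup Z] [Module 𝕜 Z]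
    (S : Type w) [CommRing S] [Algebra 𝕜 S] (ι : Z →ₗ[𝕜] S) : Prop :=
  ∀ (B : Type (max u v w)) [CommRing B] [Algebra 𝕜 B] (g : Z →ₗ[𝕜] B),
    ∃! h : S →ₐ[𝕜] B, ∀ z : Z, h (ι z) = g z

section Shuffles

/-- All ways of splitting a list into a signed pair of complementary subsequences. -/
def shSplits {α : Type*} : List α → List (ℤ × List α × List α)
  | [] => [(1, [], [])]
  | a :: l =>
      ((shSplits l).map fun t => (t.1, a :: t.2.1, t.2.2)) ++
      ((shSplits l).map fun t => ((-1) ^ t.2.1.length * t.1, t.2.1, a :: t.2.2))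

/-- Signed sum over all `(p, l.length - p)`-shuffles of the list `l`. -/
def shSum {α : Type*} {S : Type*} [AddCommGroup S] (p : ℕ) (l : List α)
    (F : List α → List α → S) : S :=
  (((shSplits l).filter fun t => t.2.1.length == p).map fun t => t.1 • F t.2.1 t.2.2).sum

/-- Unsigned sum over all `(p, l.length - p)`-shuffles of the list `l`. -/
def shSumU {α : Type*} {S : Type*} [AddCommMonoid S] (p : ℕ) (l : List α)
    (F : List α → List α → S) : S :=
  (((shSplits l).filter fun t => t.2.1.length == p).map fun t => F t.2.1 t.2.2).sum

end Shuffles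

section Cochains

variable {𝕜 : Type u} [Field 𝕜] {L : Type v} [AddCommGroup L] [Module 𝕜 L]
variable (A : LeibnizAlg 𝕜 L)
variable (S : Type w) [CommRing S] [Algebra 𝕜 S]
variable (ι : A.leftCenter →ₗ[𝕜] S)

/-- `ω` is an `n`-cochain in the standard complex `C(L) = C(L, Z, S^•(Z))`:
its component `ω k`, defined on tuples `es` of `n - 2k` elements of `L` and `k`
elements of the left center, is multilinear, symmetric in the `Z`-arguments, and
weakly skew-symmetric in the `L`-arguments. -/
structure IsCochain (n : ℕ) (ω : ℕ → List L → List A.leftCenter → S) : Prop where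
  add_e : ∀ (k : ℕ) (p q : List L) (x y : L) (fs : List A.leftCenter),
    2*k + (p.length + 1 + q.length) = n → fs.length = k →
    ω k (p ++ (x + y) :: q) fs = ω k (p ++ x :: q) fs + ω k (p ++ y :: q) fs
  smul_e : ∀ (k : ℕ) (p q : List L) (c : 𝕜) (x : L) (fs : List A.leftCenter),
    2*k + (p.length + 1 + q.length) = n → fs.length = k →
    ω k (p ++ (c • x) :: q) fs = c • ω k (p ++ x :: q) fs
  add_f : ∀ (k : ℕ) (es : List L) (p q : List A.leftCenter) (x y : A.leftCenter),
    2*k + es.length = n → p.length + 1 + q.length = k →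
    ω k es (p ++ (x + y) :: q) = ω k es (p ++ x :: q) + ω k es (p ++ y :: q)
  smul_f : ∀ (k : ℕ) (es : List L) (p q : List A.leftCenter) (c : 𝕜) (x : A.leftCenter),
    2*k + es.length = n → p.length + 1 + q.length = k →
    ω k es (p ++ (c • x) :: q) = c • ω k es (p ++ x :: q)
  symm_f : ∀ (k : ℕ) (es : List L) (p q : List A.leftCenter) (x y : A.leftCenter),
    2*k + es.length = n → p.length + 2 + q.length = k →
    ω k es (p ++ x :: y :: q) = ω k es (p ++ y :: x :: q)
  skew : ∀ (k : ℕ) (p q : List L) (x y : L) (fs : List A.leftCenter),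
    2*k + (p.length + 2 + q.length) = n → fs.length = k →
    ω k (p ++ x :: y :: q) fs + ω k (p ++ y :: x :: q) fs
      = - ω (k+1) (p ++ q) (A.spZ x y :: fs)

/-- The product of an `n`-cochain and an `m`-cochain. -/
def cmul (n m : ℕ) (ω η : ℕ → List L → List A.leftCenter → S) :
    ℕ → List L → List A.leftCenter → S :=
  fun k es fs => ∑ i ∈ Finset.range (k+1),
    if 2*i ≤ n ∧ 2*(k-i) ≤ m then
      shSum (n - 2*i) es fun es₁ es₂ =>
        shSumU i fs fun fs₁ fs₂ => ω i es₁ fs₁ * η (k-i) es₂ fs₂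
    else 0

/-- The operator `d₀` of the standard complex, where `ρ` is the action of `L` on
`S^•(Z)` by derivations. -/
def cd0 (ρ : L → Derivation 𝕜 S S) (ω : ℕ → List L → List A.leftCenter → S) :
    ℕ → List L → List A.leftCenter → S :=
  fun k es fs =>
    (∑ a ∈ Finset.range es.length,
      (-1 : ℤ)^a • ρ (es.getD a 0) (ω k (es.eraseIdx a) fs))
    + ∑ a ∈ Finset.range es.length, ∑ b ∈ Finset.Ico (a+1) es.length,
        (-1 : ℤ)^(a+1) •
          ω k ((es.eraseIdx a).set (b-1) (A.br (es.getD a 0) (es.getD b 0))) fs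

/-- The operator `δ` of the standard complex. -/
def cdel (ω : ℕ → List L → List A.leftCenter → S) :
    ℕ → List L → List A.leftCenter → S :=
  fun k es fs => ∑ j ∈ Finset.range fs.length,
    ω (k-1) (((fs.getD j 0 : A.leftCenter) : L) :: es) (fs.eraseIdx j)

/-- The symmetric product with values pushed into `S = S^•(Z)`. -/
noncomputable def spS : L →ₗ[𝕜] L →ₗ[𝕜] S := (A.spL).compr₂ ι

/-- The `S^•(Z)`-bilinear extension of the symmetric product to `S^•(Z) ⊗ L`. -/
noncomputable def pairT : (S ⊗[𝕜] L) →ₗ[𝕜] (S ⊗[𝕜] L) →ₗ[𝕜] S :=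
  TensorProduct.curry <|
    (TensorProduct.lift (LinearMap.mul 𝕜 S)).comp <|
      (TensorProduct.map (TensorProduct.lift (LinearMap.mul 𝕜 S))
        (TensorProduct.lift (spS A S ι))).comp
        (TensorProduct.tensorTensorTensorComm 𝕜 S L S L).toLinearMap

/-- `ω` is a representable `n`-cochain: each of the maps
`e ↦ ω k (es ++ [e]) fs` lies in the image of `φ = pairT`. -/
def IsRepr (n : ℕ) (ω : ℕ → List L → List A.leftCenter → S) : Prop :=
  ∀ (k : ℕ) (es : List L) (fs : List A.leftCenter),
    2*k + (es.length + 1) = n → fs.length = k →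
    ∃ x : S ⊗[𝕜] L, ∀ e : L, pairT A S ι x ((1 : S) ⊗ₜ[𝕜] e) = ω k (es ++ [e]) fs

/-- `ωt` is a choice of `φ`-preimages `ω̃` for the representable cochain `ω`. -/
def IsPre (n : ℕ) (ω : ℕ → List L → List A.leftCenter → S)
    (ωt : ℕ → List L → List A.leftCenter → S ⊗[𝕜] L) : Prop :=
  ∀ (k : ℕ) (es : List L) (fs : List A.leftCenter),
    2*k + (es.length + 1) = n → fs.length = k →
    ∀ e : L, pairT A S ι (ωt k es fs) ((1 : S) ⊗ₜ[𝕜] e) = ω k (es ++ [e]) fs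

/-- `ωc k es x fs` is the extension `ω̌` of `ω (k+1) es (·::fs)` from `Z` to all of
`S = S^•(Z)` in its first `Z`-slot, by the Leibniz rule. -/
structure IsExt (n : ℕ) (ω : ℕ → List L → List A.leftCenter → S)
    (ωc : ℕ → List L → S → List A.leftCenter → S) : Prop where
  on_gen : ∀ (k : ℕ) (es : List L) (fs : List A.leftCenter) (f : A.leftCenter),
    2*(k+1) + es.length = n → fs.length = k →
    ωc k es (ι f) fs = ω (k+1) es (f :: fs)
  map_add : ∀ (k : ℕ) (es : List L) (fs : List A.leftCenter) (x y : S),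
    2*(k+1) + es.length = n → fs.length = k →
    ωc k es (x + y) fs = ωc k es x fs + ωc k es y fs
  map_smul : ∀ (k : ℕ) (es : List L) (fs : List A.leftCenter) (c : 𝕜) (x : S),
    2*(k+1) + es.length = n → fs.length = k →
    ωc k es (c • x) fs = c • ωc k es x fs
  mul_rule : ∀ (k : ℕ) (es : List L) (fs : List A.leftCenter) (x y : S),
    2*(k+1) + es.length = n → fs.length = k →
    ωc k es (x * y) fs = x * ωc k es y fs + y * ωc k es x fs

/-- The operation `ω ◇ η` built from the Leibniz-rule extension `ωc` of `ω`. -/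
def cdiam (n m : ℕ) (ωc : ℕ → List L → S → List A.leftCenter → S)
    (η : ℕ → List L → List A.leftCenter → S) : ℕ → List L → List A.leftCenter → S :=
  fun k es fs => ∑ i ∈ Finset.range (k+1),
    if 2*(i+1) ≤ n ∧ 2*(k-i) ≤ m then
      shSum (n - 2*i - 2) es fun es₁ es₂ =>
        shSumU (k-i) fs fun fs₁ fs₂ => ωc i es₁ (η (k-i) es₂ fs₁) fs₂
    else 0

/-- The operation `ω • η` built from chosen `φ`-preimages `ωt`, `ηt`. -/
noncomputable def cbull (n m : ℕ)
    (ωt ηt : ℕ → List L → List A.leftCenter → S ⊗[𝕜] L) :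
    ℕ → List L → List A.leftCenter → S :=
  fun k es fs => (-1 : ℤ)^(m-1) • ∑ i ∈ Finset.range (k+1),
    if 2*i + 1 ≤ n ∧ 2*(k-i) + 1 ≤ m then
      shSum (n - 2*i - 1) es fun es₁ es₂ =>
        shSumU i fs fun fs₁ fs₂ => pairT A S ι (ωt i es₁ fs₁) (ηt (k-i) es₂ fs₂)
    else 0

/-- The bracket `{ω, η} = ω•η + ω◇η − (−1)^{nm} η◇ω` of representable cochains. -/
noncomputable def cpbr (n m : ℕ)
    (ω η : ℕ → List L → List A.leftCenter → S)
    (ωt ηt : ℕ → List L → List A.leftCenter → S ⊗[𝕜] L)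
    (ωc ηc : ℕ → List L → S → List A.leftCenter → S) :
    ℕ → List L → List A.leftCenter → S :=
  fun k es fs => cbull A S ι n m ωt ηt k es fs + cdiam A S n m ωc η k es fs
    - (-1 : ℤ)^(n*m) • cdiam A S m n ηc ω k es fs

/-- The canonical 3-cochain `Θ`. -/
def ThetaC : ℕ → List L → List A.leftCenter → S :=
  fun k es fs => match k, es, fs with
    | 0, [e₁, e₂, e₃], [] => ι (A.spZ (A.br e₁ e₂) e₃)
    | 1, [e], [f] => - ι (A.spZ e (f : L))
    | _, _, _ => 0

/-- The 2-cochain `ζ` with `ζ₀ = (·,·)` and `ζ₁(f) = −2f`. -/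
def zetaC : ℕ → List L → List A.leftCenter → S :=
  fun k es fs => match k, es, fs with
    | 0, [e₁, e₂], [] => ι (A.spZ e₁ e₂)
    | 1, [], [f] => (-2 : 𝕜) • ι f
    | _, _, _ => 0

/-- The representable 1-cochain `e^♭ = (e, ·)`. -/
def eflat (e : L) : ℕ → List L → List A.leftCenter → S :=
  fun k es fs => match k, es, fs with
    | 0, [e'], [] => ι (A.spZ e e')
    | _, _, _ => 0

end Cochains

section Theorems

variable {𝕜 : Type u} [Field 𝕜] {L : Type v} [AddCommGroup L] [Module 𝕜 L]


namespace Scratch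

variable {α : Type*}

def swf : ℤ × List α × List α → ℤ × List α × List α :=
  fun t => ((-1 : ℤ)^(t.2.1.length * t.2.2.length) * t.1, t.2.2, t.2.1)

lemma shSplits_len : ∀ (l : List α) t, t ∈ shSplits l → t.2.1.length + t.2.2.length = l.length := by
  intro l
  induction l with
  | nil => intro t ht; simp [shSplits] at ht; subst ht; simp
  | cons a l ih =>
    intro t ht
    simp only [shSplits, List.mem_append, List.mem_map] at ht
    rcases ht with ⟨u, hu, rfl⟩ | ⟨u, hu, rfl⟩ <;> have := ih u hu <;> simp <;> omega

lemma shSplits_swap_perm (l : List α) : ((shSplits l).map swf).Perm (shSplits l) := by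
  induction l with
  | nil => simp [shSplits, swf]
  | cons a l ih =>
    have h1 : swf (α := α) ∘ (fun t => (t.1, a :: t.2.1, t.2.2))
        = (fun t => ((-1 : ℤ) ^ t.2.1.length * t.1, t.2.1, a :: t.2.2)) ∘ swf := by
      funext t
      simp only [Function.comp, swf]
      refine Prod.ext ?_ rfl
      simp only [List.length_cons]
      rw [add_comm t.2.1.length 1, add_mul, one_mul, pow_add]
      ring
    have h2 : swf (α := α) ∘ (fun t => ((-1 : ℤ) ^ t.2.1.length * t.1, t.2.1, a :: t.2.2))
        = (fun t => (t.1, a :: t.2.1, t.2.2)) ∘ swf := by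
      funext t
      simp only [Function.comp, swf]
      refine Prod.ext ?_ rfl
      simp only [List.length_cons]
      rw [mul_add, mul_one, pow_add]
      ring_nf
      rw [Even.neg_one_pow ⟨t.2.1.length, by ring⟩, mul_one]
    have e1 : (shSplits (a :: l)).map swf
        = (((shSplits l).map swf).map (fun t => ((-1 : ℤ) ^ t.2.1.length * t.1, t.2.1, a :: t.2.2))) ++
          (((shSplits l).map swf).map (fun t => (t.1, a :: t.2.1, t.2.2))) := by
      show ((((shSplits l).map fun t => (t.1, a :: t.2.1, t.2.2)) ++
          ((shSplits l).map fun t => ((-1 : ℤ) ^ t.2.1.length * t.1, t.2.1, a :: t.2.2))).map swf) = _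
      rw [List.map_append, List.map_map, List.map_map, h1, h2, List.map_map, List.map_map]
    rw [e1]
    refine List.Perm.trans (((ih.map _).append (ih.map _))) ?_
    show List.Perm _ (((shSplits l).map fun t => (t.1, a :: t.2.1, t.2.2)) ++
          ((shSplits l).map fun t => ((-1 : ℤ) ^ t.2.1.length * t.1, t.2.1, a :: t.2.2)))
    exact List.perm_append_comm

lemma map_filter_map_sum {β γ : Type*} [AddCommMonoid γ] (g : α → β) (P : β → Bool)
    (f : β → γ) (l : List α) :
    (((l.map g).filter P).map f).sum = ((l.filter (fun x => P (g x))).map (fun x => f (g x))).sum := by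
  induction l with
  | nil => simp
  | cons a l ih => by_cases h : P (g a) <;> simp [h, ih]

lemma shSum_swap {S : Type*} [AddCommGroup S] (p q : ℕ) (l : List α)
    (h : p + q = l.length) (F : List α → List α → S) :
    shSum q l (fun B A => F A B) = ((-1 : ℤ))^(p*q) • shSum p l F := by
  unfold shSum
  have hperm := shSplits_swap_perm (α := α) l
  calc (((shSplits l).filter fun t => t.2.1.length == q).map
          fun t => t.1 • F t.2.2 t.2.1).sum
      = ((((shSplits l).map swf).filter fun t => t.2.1.length == q).map
          fun t => t.1 • F t.2.2 t.2.1).sum :=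
        (((hperm.filter _).map _).sum_eq).symm
    _ = (((shSplits l).filter fun t => t.2.2.length == q).map
          fun t => ((-1 : ℤ)^(t.2.1.length * t.2.2.length) * t.1) • F t.2.1 t.2.2).sum := by
        rw [map_filter_map_sum]; rfl
    _ = (((shSplits l).filter fun t => t.2.1.length == p).map
          fun t => ((-1 : ℤ)^(t.2.1.length * t.2.2.length) * t.1) • F t.2.1 t.2.2).sum := by
        congr 1
        apply congrArg
        apply List.filter_congr
        intro t ht
        have hlen := shSplits_len l t ht
        rw [Bool.eq_iff_iff]
        simp only [beq_iff_eq]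
        omega
    _ = (((shSplits l).filter fun t => t.2.1.length == p).map
          fun t => ((-1 : ℤ)^(p * q)) • (t.1 • F t.2.1 t.2.2)).sum := by
        congr 1
        apply List.map_congr_left
        intro t ht
        rw [List.mem_filter] at ht
        have hlen := shSplits_len l t ht.1
        have hp : t.2.1.length = p := by simpa using ht.2
        have hq : t.2.2.length = q := by omega
        rw [hp, hq, mul_smul]
    _ = ((-1 : ℤ))^(p*q) • (((shSplits l).filter fun t => t.2.1.length == p).map
          fun t => t.1 • F t.2.1 t.2.2).sum := by
        have he : (fun t : ℤ × List α × List α => ((-1 : ℤ)^(p * q)) • (t.1 • F t.2.1 t.2.2))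
            = (fun x => ((-1 : ℤ)^(p * q)) • x) ∘ (fun t => t.1 • F t.2.1 t.2.2) := rfl
        rw [he, ← List.map_map]
        exact (List.smul_sum).symm

lemma shSumU_swap {S : Type*} [AddCommMonoid S] (p q : ℕ) (l : List α)
    (h : p + q = l.length) (F : List α → List α → S) :
    shSumU q l (fun B A => F A B) = shSumU p l F := by
  unfold shSumU
  have hperm := shSplits_swap_perm (α := α) l
  calc (((shSplits l).filter fun t => t.2.1.length == q).map
          fun t => F t.2.2 t.2.1).sum
      = ((((shSplits l).map swf).filter fun t => t.2.1.length == q).map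
          fun t => F t.2.2 t.2.1).sum :=
        (((hperm.filter _).map _).sum_eq).symm
    _ = (((shSplits l).filter fun t => t.2.2.length == q).map
          fun t => F t.2.1 t.2.2).sum := by
        rw [map_filter_map_sum]; rfl
    _ = (((shSplits l).filter fun t => t.2.1.length == p).map
          fun t => F t.2.1 t.2.2).sum := by
        congr 1
        apply congrArg
        apply List.filter_congr
        intro t ht
        have hlen := shSplits_len l t ht
        rw [Bool.eq_iff_iff]
        simp only [beq_iff_eq]
        omega

end Scratch

private lemma npow (a : ℕ) : ((-1 : ℤ))^a = if a % 2 = 0 then 1 else -1 := by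
  rcases Nat.even_or_odd a with h | h
  · rw [h.neg_one_pow, if_pos (Nat.even_iff.mp h)]
  · rw [h.neg_one_pow, if_neg (by rw [Nat.odd_iff] at h; omega)]

private lemma sign_helper (p q i j : ℕ) :
    ((-1 : ℤ))^(q + 2*j) = -(((-1 : ℤ))^((p+2*i+1)*(q+2*j+1)) * (((-1 : ℤ))^(p+2*i) * ((-1 : ℤ))^(p*q))) := by
  have h1 : (q+2*j) % 2 = q % 2 := by omega
  have h2 : (p+2*i) % 2 = p % 2 := by omega
  have h3 : (p*q) % 2 = (p%2)*(q%2)%2 := Nat.mul_mod p q 2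
  have h4 : ((p+2*i+1)*(q+2*j+1)) % 2 = ((p+2*i+1)%2)*((q+2*j+1)%2)%2 :=
    Nat.mul_mod (p+2*i+1) (q+2*j+1) 2
  have h5 : (p+2*i+1)%2 = (p%2+1)%2 := by omega
  have h6 : (q+2*j+1)%2 = (q%2+1)%2 := by omega
  rw [npow, npow, npow, npow, h1, h2, h3, h4, h5, h6]
  rcases Nat.mod_two_eq_zero_or_one p with hp | hp <;>
    rcases Nat.mod_two_eq_zero_or_one q with hq | hq <;>
      rw [hp, hq] <;> norm_num

private lemma spZ_symm (A : LeibnizAlg 𝕜 L) (e f : L) : A.spZ e f = A.spZ f e :=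
  Subtype.ext (by simp [LeibnizAlg.spZ, LeibnizAlg.sp, add_comm])

private lemma pairT_tmul (A : LeibnizAlg 𝕜 L) (S : Type w) [CommRing S] [Algebra 𝕜 S]
    (ι : A.leftCenter →ₗ[𝕜] S) (s t : S) (e f : L) :
    pairT A S ι (s ⊗ₜ[𝕜] e) (t ⊗ₜ[𝕜] f) = (s * t) * ι (A.spZ e f) := by
  simp [pairT, spS, LeibnizAlg.spL, TensorProduct.tensorTensorTensorComm_tmul]

private lemma pairT_symm (A : LeibnizAlg 𝕜 L) (S : Type w) [CommRing S] [Algebra 𝕜 S]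
    (ι : A.leftCenter →ₗ[𝕜] S) (x y : S ⊗[𝕜] L) :
    pairT A S ι x y = pairT A S ι y x := by
  induction x using TensorProduct.induction_on with
  | zero => simp
  | add a b ha hb => simp only [map_add, LinearMap.add_apply, ha, hb]
  | tmul s e =>
    induction y using TensorProduct.induction_on with
    | zero => simp
    | add a b ha hb => simp only [map_add, LinearMap.add_apply, ha, hb]
    | tmul t f => rw [pairT_tmul, pairT_tmul, spZ_symm]; ring

set_option maxHeartbeats 2000000 in
theorem cpbr_antisymm (A : LeibnizAlg 𝕜 L) (S : Type w) [CommRing S] [Algebra 𝕜 S]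
    (ι : A.leftCenter →ₗ[𝕜] S) (hS : IsSymAlg S ι)
    (n m : ℕ) (ω η : ℕ → List L → List A.leftCenter → S)
    (hω : IsCochain A S n ω) (hη : IsCochain A S m η)
    (ωt ηt : ℕ → List L → List A.leftCenter → S ⊗[𝕜] L)
    (hωt : IsPre A S ι n ω ωt) (hηt : IsPre A S ι m η ηt)
    (ωc ηc : ℕ → List L → S → List A.leftCenter → S)
    (hωc : IsExt A S ι n ω ωc) (hηc : IsExt A S ι m η ηc) :
    ∀ (k : ℕ) (es : List L) (fs : List A.leftCenter),
      2*k + es.length + 2 = n + m → fs.length = k →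
      (cpbr A S ι n m ω η ωt ηt ωc ηc k es fs
        = - ((-1 : ℤ)^(n*m) • cpbr A S ι m n η ω ηt ωt ηc ωc k es fs))
      ∧ (cbull A S ι n m ωt ηt k es fs
        = - ((-1 : ℤ)^(n*m) • cbull A S ι m n ηt ωt k es fs)) := by
  intro k es fs hlen hfs
  have hbull : cbull A S ι n m ωt ηt k es fs
      = - ((-1 : ℤ)^(n*m) • cbull A S ι m n ηt ωt k es fs) := by
    unfold cbull
    conv_rhs => rw [← Finset.sum_range_reflect]
    rw [Finset.smul_sum]
    conv_rhs => rw [Finset.smul_sum, Finset.smul_sum, ← Finset.sum_neg_distrib]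
    apply Finset.sum_congr rfl
    intro i hi
    rw [Finset.mem_range] at hi
    have hik : i ≤ k := by omega
    simp only [Nat.add_sub_cancel]
    have hki : k - (k - i) = i := by omega
    rw [hki]
    by_cases hc : 2*i + 1 ≤ n ∧ 2*(k-i) + 1 ≤ m
    · rw [if_pos hc, if_pos ⟨hc.2, hc.1⟩]
      set p := n - 2*i - 1 with hp
      set q := m - 2*(k-i) - 1 with hq
      have hpq : p + q = es.length := by omega
      have key : shSum (m - 2*(k-i) - 1) es (fun As Bs => shSumU (k-i) fs
            fun C D => pairT A S ι (ηt (k-i) As C) (ωt i Bs D))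
          = ((-1 : ℤ))^(p*q) • shSum p es (fun As Bs => shSumU i fs
            fun C D => pairT A S ι (ωt i As C) (ηt (k-i) Bs D)) := by
        have h1 : ∀ As Bs : List L, shSumU (k-i) fs
              (fun C D => pairT A S ι (ηt (k-i) As C) (ωt i Bs D))
            = shSumU i fs (fun C D => pairT A S ι (ωt i Bs C) (ηt (k-i) As D)) := by
          intro As Bs
          have h0 : (fun C D => pairT A S ι (ηt (k-i) As C) (ωt i Bs D))
              = (fun C D => pairT A S ι (ωt i Bs D) (ηt (k-i) As C)) := by
            funext C D; exact pairT_symm A S ι _ _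
          rw [h0]
          exact Scratch.shSumU_swap i (k-i) fs (by omega)
            (fun C D => pairT A S ι (ωt i Bs C) (ηt (k-i) As D))
        have h2 : (fun As Bs => shSumU (k-i) fs
              fun C D => pairT A S ι (ηt (k-i) As C) (ωt i Bs D))
            = (fun As Bs => (fun As' Bs' => shSumU i fs
              fun C D => pairT A S ι (ωt i As' C) (ηt (k-i) Bs' D)) Bs As) := by
          funext As Bs; exact h1 As Bs
        rw [← hq, h2]
        exact Scratch.shSum_swap p q es hpq _
      rw [key, smul_smul, smul_smul, ← neg_smul]
      congr 1
      have hm1 : m - 1 = q + 2*(k-i) := by omega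
      have hn1 : n - 1 = p + 2*i := by omega
      have hnm : n*m = (p+2*i+1)*(q+2*(k-i)+1) := by
        rw [show n = p+2*i+1 by omega, show m = q+2*(k-i)+1 by omega]
      rw [hm1, hn1, hnm]
      linear_combination sign_helper p q i (k-i)
    · rw [if_neg hc, if_neg (by tauto)]
      simp
  refine ⟨?_, hbull⟩
  unfold cpbr
  rw [hbull]
  have hc2 : ((-1 : ℤ)^(n*m)) • ((-1 : ℤ)^(n*m) • cdiam A S n m ωc η k es fs)
      = cdiam A S n m ωc η k es fs := by
    rw [smul_smul, ← pow_add, Even.neg_one_pow ⟨n*m, by ring⟩, one_smul]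
  rw [Nat.mul_comm m n, smul_sub, smul_add, hc2]
  abel


end Theorems
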